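/- arXiv:2203.03873 — 2 statements merged into one kernel-verified Lean document; each statement's English description precedes it below -/
import Mathlib

section
/- Let A ⊆ ℤ be infinite and a, x, y positive integers. For t ∈ ℤ let I(t) = {t+1, ..., t+x}. Suppose for every t ∈ ℤ, either |A ∩ I(t)| ≤ a, or |A ∩ I(t)| + |A ∩ I(t+y)| ≤ 2a. Then the upper density of A is at most a/x. -/
open Filter Set

/-- The translateSet `S + t` of a set of integers. -/
def translateSet (S : Set ℤ) (t : ℤ) : Set ℤ := (· + t) '' S

/-- Upper density of a set of integers. -/
noncomputable def upperDensity (A : Set ℤ) : ℝ :=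
  Filter.limsup (fun n : ℕ => ((A ∩ Set.Icc (-(n : ℤ)) (n : ℤ)).ncard : ℝ) / (2 * n + 1)) Filter.atTop

/-- Lower density of a set of integers. -/
noncomputable def lowerDensity (A : Set ℤ) : ℝ :=
  Filter.liminf (fun n : ℕ => ((A ∩ Set.Icc (-(n : ℤ)) (n : ℤ)).ncard : ℝ) / (2 * n + 1)) Filter.atTop

/-- `A` is `S`-covering: every integer lies in some translateSet `S + a`, `a ∈ A`. -/
def SCovering (S A : Set ℤ) : Prop := ∀ t : ℤ, ∃ a ∈ A, t ∈ translateSet S a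

/-- `A` is `S`-blocking: `A` meets every translateSet of `S`. -/
def SBlocking (S A : Set ℤ) : Prop := ∀ t : ℤ, (A ∩ translateSet S t).Nonempty

/-- `A` is `S`-free: `A` contains no translateSet of `S`. -/
def SFree (S A : Set ℤ) : Prop := ∀ t : ℤ, ¬ translateSet S t ⊆ A

/-- `A` is `S`-packing: distinct translates `S + a₁`, `S + a₂` with `a₁, a₂ ∈ A` are disjoint. -/
def SPacking (S A : Set ℤ) : Prop :=
  ∀ a₁ ∈ A, ∀ a₂ ∈ A, a₁ ≠ a₂ → Disjoint (translateSet S a₁) (translateSet S a₂)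

/-- Maximum packing density of `S`. -/
noncomputable def dP (S : Set ℤ) : ℝ := sSup (upperDensity '' {A | SPacking S A})

/-- Minimum covering density of `S`. -/
noncomputable def dC (S : Set ℤ) : ℝ := sInf (lowerDensity '' {A | SCovering S A})

/-- Minimum blocking density of `S`. -/
noncomputable def dB (S : Set ℤ) : ℝ := sInf (lowerDensity '' {A | SBlocking S A})

/-- `d_f(S)`: supremum of upper densities of `S`-free sets. -/
noncomputable def dF (S : Set ℤ) : ℝ := sSup (upperDensity '' {A | SFree S A})

/-- `d_f(S, -S)`: supremum of upper densities of sets free of translates of both `S` and `-S`. -/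
noncomputable def dF2 (S : Set ℤ) : ℝ := sSup (upperDensity '' {A | SFree S A ∧ SFree (-S) A})

/-!
Write `F t = |A ∩ (t, t + x]|`. Each point of `[-n, n]` lies in `x` of the windows `(t, t + x]`
with `-n - x ≤ t < n`, so `x |A ∩ [-n, n]|` is at most the sum of `F` over these `2n + x`
values of `t`. The excess `(F t - a)⁺` lies in `[0, a]`, and when it is positive the hypothesis
makes `F (t + y)` fall short of `a` by at least as much; hence
`F t - a ≤ (F t - a)⁺ - (F (t - y) - a)⁺`, and summed over a block of consecutive `t` this
telescopes to at most `a y`. So `|A ∩ [-n, n]| ≤ a (2n + x + y) / x`.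
-/

open Finset Topology

theorem Finset.sum_range_shift_sub_comm {M : Type*} [AddCommGroup M] (g : ℕ → M) (m n : ℕ) :
    ∑ i ∈ range m, (g (n + i) - g i) = ∑ i ∈ range n, (g (m + i) - g i) := by
  have h := (sum_range_add g n m).symm.trans ((add_comm n m) ▸ sum_range_add g m n)
  simp only [sum_sub_distrib]
  linear_combination (norm := abel) h

theorem sum_range_le_of_pairing {F : ℤ → ℕ} {a y : ℕ}
    (hF : ∀ t, F t ≤ a ∨ F t + F (t + y) ≤ 2 * a) (s : ℤ) (L : ℕ) :
    ∑ i ∈ range L, F (s + i) ≤ a * (L + y) := by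
  set e : ℕ → ℤ := fun i => ((F (s - y + i) - a : ℕ) : ℤ)
  have hstep : ∀ i : ℕ, (F (s + i) : ℤ) - a ≤ e (y + i) - e i := by
    intro i
    have hi := hF (s - y + i)
    rw [show s - y + i + y = s + i by ring] at hi
    simp only [e, show s - y + ((y + i : ℕ) : ℤ) = s + i by push_cast; ring]
    omega
  have hbound : ∀ i, 0 ≤ e i ∧ e i ≤ a := fun i => by
    have := hF (s - y + i)
    simp only [e]
    omega
  have hsum : ∑ i ∈ range L, ((F (s + i) : ℤ) - a) ≤ a * y := calc
    _ ≤ ∑ i ∈ range L, (e (y + i) - e i) := sum_le_sum fun i _ => hstep i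
    _ = ∑ i ∈ range y, (e (L + i) - e i) := sum_range_shift_sub_comm e L y
    _ ≤ ∑ _i ∈ range y, (a : ℤ) := sum_le_sum fun i _ => by linarith [hbound (L + i), hbound i]
    _ = a * y := by simp [mul_comm]
  simp only [sum_sub_distrib, sum_const, card_range, nsmul_eq_mul] at hsum
  zify
  linarith

theorem ncard_inter_Icc_eq_sum_range (A : Set ℤ) [DecidablePred (· ∈ A)] (t : ℤ) (L : ℕ) :
    (A ∩ Set.Icc (t + 1) (t + L)).ncard = ∑ i ∈ range L, if t + 1 + i ∈ A then 1 else 0 := by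
  have himage : A ∩ Set.Icc (t + 1) (t + L) =
      (fun i : ℕ => t + 1 + i) '' ↑((range L).filter fun i : ℕ => t + 1 + i ∈ A) := by
    ext u
    simp only [Set.mem_inter_iff, Set.mem_Icc, Set.mem_image, coe_filter, Finset.mem_range,
      Set.mem_ofPred_eq]
    constructor
    · rintro ⟨hu, hlo, hhi⟩
      exact ⟨(u - t - 1).toNat, ⟨by omega, by rwa [show t + 1 + (u - t - 1).toNat = u by omega]⟩,
        by omega⟩
    · rintro ⟨i, ⟨hi, hA⟩, rfl⟩
      exact ⟨hA, by omega, by omega⟩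
  rw [himage, Set.ncard_image_of_injective _ fun i j hij => by simpa using hij,
    Set.ncard_coe_finset, card_filter]

theorem mul_ncard_le_sum_ncard_window (A : Set ℤ) (x : ℕ) (s : ℤ) (L : ℕ) {lo hi : ℤ}
    (hlo : s + x ≤ lo) (hhi : hi ≤ s + L) :
    x * (A ∩ Set.Icc lo hi).ncard ≤
      ∑ i ∈ range L, (A ∩ Set.Icc (s + i + 1) (s + i + x)).ncard := by
  classical
  -- Each window `(t, t + x]` is the union of the points `t + 1 + j`, `j < x`; exchanging the sums,
  -- the `j`-th shift of the windows sweeps out `[s + j + 1, s + j + L] ⊇ [lo, hi]`.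
  calc x * (A ∩ Set.Icc lo hi).ncard
      = ∑ _j ∈ range x, (A ∩ Set.Icc lo hi).ncard := by simp
    _ ≤ ∑ j ∈ range x, (A ∩ Set.Icc (s + j + 1) (s + j + L)).ncard := by
        refine sum_le_sum fun j hj => Set.ncard_le_ncard ?_ ((Set.finite_Icc _ _).inter_of_right A)
        have := mem_range.mp hj
        exact Set.inter_subset_inter_right A (Set.Icc_subset_Icc (by omega) (by omega))
    _ = ∑ i ∈ range L, (A ∩ Set.Icc (s + i + 1) (s + i + x)).ncard := by
        simp only [ncard_inter_Icc_eq_sum_range]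
        rw [sum_comm]
        refine sum_congr rfl fun i _ => sum_congr rfl fun j _ => ?_
        rw [show s + j + 1 + i = s + i + 1 + j by ring]

theorem upperDensity_le_of_ncard_le {A : Set ℤ} {c C : ℝ}
    (hA : ∀ n : ℕ, ((A ∩ Set.Icc (-(n : ℤ)) n).ncard : ℝ) ≤ c * (2 * n + 1) + C) :
    upperDensity A ≤ c := by
  have hpos : ∀ n : ℕ, (0 : ℝ) < 2 * n + 1 := fun n => by positivity
  have hle : ∀ n : ℕ, ((A ∩ Set.Icc (-(n : ℤ)) n).ncard : ℝ) / (2 * n + 1) ≤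
      c + C / (2 * n + 1) := fun n => by
    rw [div_le_iff₀ (hpos n), add_mul, div_mul_cancel₀ _ (hpos n).ne']
    exact hA n
  have hlim : Tendsto (fun n : ℕ => c + C / (2 * n + 1)) atTop (𝓝 c) := by
    simpa using tendsto_const_nhds.add <| Tendsto.const_div_atTop
      (tendsto_atTop_add_const_right _ 1 <|
        (tendsto_natCast_atTop_atTop (R := ℝ)).const_mul_atTop two_pos) C
  calc upperDensity A
      ≤ limsup (fun n : ℕ => c + C / (2 * n + 1)) atTop :=
        limsup_le_limsup (.of_forall hle)
          (isBoundedUnder_of ⟨0, fun n => by positivity⟩).isCoboundedUnder_le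
          hlim.isBoundedUnder_le
    _ = c := hlim.limsup_eq

theorem stmt5_general (A : Set ℤ) (a x y : ℕ) (hx : 0 < x)
    (h : ∀ t : ℤ,
      (A ∩ Set.Icc (t + 1) (t + x)).ncard ≤ a ∨
      (A ∩ Set.Icc (t + 1) (t + x)).ncard + (A ∩ Set.Icc (t + y + 1) (t + y + x)).ncard ≤ 2 * a) :
    upperDensity A ≤ (a : ℝ) / x := by
  refine upperDensity_le_of_ncard_le (C := a * (x + y - 1) / x) fun n => ?_
  have hcount : x * (A ∩ Set.Icc (-(n : ℤ)) n).ncard ≤ a * (2 * n + x + y) := calc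
    _ ≤ ∑ i ∈ Finset.range (2 * n + x), (A ∩ Set.Icc (-n - x + i + 1) (-n - x + i + x)).ncard :=
        mul_ncard_le_sum_ncard_window A x _ _ (by omega) (by push_cast; omega)
    _ ≤ a * (2 * n + x + y) := sum_range_le_of_pairing h _ _
  calc ((A ∩ Set.Icc (-(n : ℤ)) n).ncard : ℝ)
      ≤ a * (2 * n + x + y) / x := by
        rw [le_div_iff₀ (by exact_mod_cast hx), mul_comm]
        exact_mod_cast hcount
    _ = a / x * (2 * n + 1) + a * (x + y - 1) / x := by ring

theorem stmt5 (A : Set ℤ) (hA : A.Infinite) (a x y : ℕ)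
    (ha : 0 < a) (hx : 0 < x) (hy : 0 < y)
    (h : ∀ t : ℤ,
      (A ∩ Set.Icc (t + 1) (t + x)).ncard ≤ a ∨
      (A ∩ Set.Icc (t + 1) (t + x)).ncard + (A ∩ Set.Icc (t + y + 1) (t + y + x)).ncard ≤ 2 * a) :
    upperDensity A ≤ (a : ℝ) / x :=
  stmt5_general A a x y hx h
end

section
/- Let λ₁, λ₂ be coprime positive integers with λ₁ ≡ λ₂ - 1 (mod 3) and S = {0, λ₁, λ₁+λ₂}. Then the set A = { iλ₁ : 1 ≤ i ≤ 2λ₁+λ₂, i ≡ 0 (mod 3) } + (2λ₁+λ₂)ℤ is S-packing and has density ⌊(1/3)(2λ₁+λ₂)⌋/(2λ₁+λ₂). Hence d_p(S) ≥ ⌊(1/3)(2λ₁+λ₂)⌋/(2λ₁+λ₂). -/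
open Filter Set

/-!
Write `m = 2λ₁ + λ₂`. Modulo `m` we have `λ₁ + λ₂ ≡ -λ₁`, so `S ≡ {-λ₁, 0, λ₁}`. As `λ₁` is a
unit mod `m`, a coincidence `a₁ + s₁ = a₂ + s₂` with `aₖ ≡ iₖλ₁`, `sₖ ≡ jₖλ₁` gives
`i₁ + j₁ ≡ i₂ + j₂ (mod m)`; since the `iₖ` are multiples of 3 in `[1, m]` and `|jₖ| ≤ 1`, this
is an equality of integers and forces `j₁ = j₂`. Distinct elements of `S` differ by less than
`m`, so `s₁ = s₂` and `a₁ = a₂`. The set `A` is `m`-periodic with exactly `⌊m/3⌋` elements in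
every window of length `m`, which pins both densities to `⌊m/3⌋/m`.
-/

open Topology

lemma tendsto_div_of_abs_sub_mul_le {u v : ℕ → ℝ} {c C : ℝ} (hv : Tendsto v atTop atTop)
    (h : ∀ n, |u n - c * v n| ≤ C) : Tendsto (fun n => u n / v n) atTop (𝓝 c) := by
  have hsmall : Tendsto (fun n => (u n - c * v n) / v n) atTop (𝓝 0) := by
    refine squeeze_zero_norm' ?_ ((tendsto_const_nhds (x := C)).div_atTop hv)
    filter_upwards [hv.eventually_gt_atTop 0] with n hn
    rw [norm_div, Real.norm_eq_abs, Real.norm_eq_abs, abs_of_pos hn]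
    exact div_le_div_of_nonneg_right (h n) hn.le
  refine (by simpa using hsmall.const_add c : Tendsto _ atTop (𝓝 c)).congr' ?_
  filter_upwards [hv.eventually_gt_atTop 0] with n hn
  field_simp
  ring

section WindowCount

variable {A : Set ℤ} {m : ℤ} {k : ℕ}

lemma ncard_inter_Ico_add_mul (hwin : ∀ a, (A ∩ Ico a (a + m)).ncard = k) (hm : 0 ≤ m)
    (a : ℤ) (t : ℕ) : (A ∩ Ico a (a + m * t)).ncard = k * t := by
  induction t with
  | zero => simp
  | succ t ih =>
    have hsplit : Ico a (a + m * (t + 1 : ℕ)) =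
        Ico a (a + m * t) ∪ Ico (a + m * t) (a + m * t + m) := by
      rw [Ico_union_Ico_eq_Ico (by nlinarith) (by omega)]
      push_cast
      ring_nf
    rw [hsplit, inter_union_distrib_left,
      ncard_union_eq (Ico_disjoint_Ico_same.mono inter_subset_right inter_subset_right)
        ((finite_Ico _ _).inter_of_right _) ((finite_Ico _ _).inter_of_right _), ih, hwin]
    ring

lemma abs_ncard_inter_Ico_mul_sub_le (hwin : ∀ a, (A ∩ Ico a (a + m)).ncard = k) (hm : 0 < m)
    (a N : ℤ) (hN : 0 ≤ N) : |((A ∩ Ico a (a + N)).ncard : ℤ) * m - k * N| ≤ k * m := by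
  obtain ⟨t, ht⟩ : ∃ t : ℕ, (t : ℤ) = N / m :=
    ⟨(N / m).toNat, Int.toNat_of_nonneg (Int.ediv_nonneg hN hm.le)⟩
  have hlo : m * t ≤ N := ht ▸ Int.mul_ediv_self_le hm.ne'
  have hhi : N < m * (t + 1) := by rw [ht, mul_add, mul_one]; exact Int.lt_mul_ediv_self_add hm
  have hlower : k * t ≤ (A ∩ Ico a (a + N)).ncard := by
    rw [← ncard_inter_Ico_add_mul hwin hm.le a t]
    exact ncard_le_ncard (inter_subset_inter_right _ (Ico_subset_Ico_right (by omega)))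
      ((finite_Ico _ _).inter_of_right _)
  have hupper : (A ∩ Ico a (a + N)).ncard ≤ k * (t + 1) := by
    rw [← ncard_inter_Ico_add_mul hwin hm.le a (t + 1)]
    exact ncard_le_ncard (inter_subset_inter_right _ (Ico_subset_Ico_right (by push_cast; omega)))
      ((finite_Ico _ _).inter_of_right _)
  have hlower' : (k * t : ℤ) ≤ (A ∩ Ico a (a + N)).ncard := by exact_mod_cast hlower
  have hupper' : ((A ∩ Ico a (a + N)).ncard : ℤ) ≤ k * (t + 1) := by exact_mod_cast hupper
  have hk : (0 : ℤ) ≤ k := by positivity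
  rw [abs_le]
  constructor <;> nlinarith [mul_le_mul_of_nonneg_right hlower' hm.le,
    mul_le_mul_of_nonneg_right hupper' hm.le, mul_le_mul_of_nonneg_left hlo hk,
    mul_le_mul_of_nonneg_left hhi.le hk]

lemma tendsto_ncard_inter_Icc_div (hwin : ∀ a, (A ∩ Ico a (a + m)).ncard = k) (hm : 0 < m) :
    Tendsto (fun n : ℕ => ((A ∩ Icc (-(n : ℤ)) n).ncard : ℝ) / (2 * n + 1)) atTop
      (𝓝 ((k : ℝ) / m)) := by
  have hmR : (0 : ℝ) < m := by exact_mod_cast hm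
  refine tendsto_div_of_abs_sub_mul_le (C := k) ?_ fun n => ?_
  · exact tendsto_atTop_add_const_right _ 1
      (tendsto_natCast_atTop_atTop.const_mul_atTop two_pos)
  · have h := abs_ncard_inter_Ico_mul_sub_le hwin hm (-n) (2 * n + 1) (by positivity)
    rw [show -(n : ℤ) + (2 * n + 1) = n + 1 by ring, Ico_add_one_right_eq_Icc] at h
    have hR : |((A ∩ Icc (-(n : ℤ)) n).ncard : ℝ) * m - k * (2 * n + 1)| ≤ k * m := by
      exact_mod_cast h
    have hscale : (((A ∩ Icc (-(n : ℤ)) n).ncard : ℝ) - k / m * (2 * n + 1)) * m =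
        ((A ∩ Icc (-(n : ℤ)) n).ncard : ℝ) * m - k * (2 * n + 1) := by
      field_simp
    rw [← mul_le_mul_iff_of_pos_right hmR]
    calc |((A ∩ Icc (-(n : ℤ)) n).ncard : ℝ) - k / m * (2 * n + 1)| * m
        = |((A ∩ Icc (-(n : ℤ)) n).ncard : ℝ) * m - k * (2 * n + 1)| := by
          rw [← hscale, abs_mul, abs_of_pos hmR]
      _ ≤ k * m := hR

end WindowCount

def everyThirdMultiple (m c : ℤ) : Set ℤ :=
  {x | ∃ i : ℤ, 1 ≤ i ∧ i ≤ m ∧ i % 3 = 0 ∧ m ∣ x - i * c}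

lemma ncard_multiples_three_Icc (m : ℤ) :
    {i : ℤ | 1 ≤ i ∧ i ≤ m ∧ i % 3 = 0}.ncard = (m / 3).toNat := by
  have h : {i : ℤ | 1 ≤ i ∧ i ≤ m ∧ i % 3 = 0} = (3 * ·) '' Icc 1 (m / 3) := by
    ext i
    simp only [mem_image, mem_Icc]
    constructor
    · rintro ⟨hi1, hi2, hi3⟩
      exact ⟨i / 3, ⟨by omega, by omega⟩, by omega⟩
    · rintro ⟨j, ⟨hj1, hj2⟩, rfl⟩
      exact ⟨by omega, by omega, by omega⟩
  rw [h, ncard_image_of_injective _ (fun a b hab => by simpa using hab), ← Finset.coe_Icc,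
    ncard_coe_finset, Int.card_Icc, add_sub_cancel_right]

lemma exists_dvd_sub_mul_of_mem_triple {l1 l2 s : ℤ} (hs : s ∈ ({0, l1, l1 + l2} : Set ℤ)) :
    ∃ j : ℤ, -1 ≤ j ∧ j ≤ 1 ∧ 2 * l1 + l2 ∣ s - j * l1 := by
  rcases hs with rfl | rfl | rfl
  · exact ⟨0, by norm_num, by norm_num, by simp⟩
  · exact ⟨1, by norm_num, by norm_num, by simp⟩
  · exact ⟨-1, by norm_num, by norm_num, ⟨1, by ring⟩⟩

section EveryThirdMultiple

variable {m c : ℤ}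

lemma ncard_everyThirdMultiple_inter_Ico (hm : 0 < m) (hc : IsCoprime m c) (a : ℤ) :
    (everyThirdMultiple m c ∩ Ico a (a + m)).ncard = (m / 3).toNat := by
  have himage : everyThirdMultiple m c ∩ Ico a (a + m) =
      (fun i => toIcoMod hm a (i * c)) '' {i : ℤ | 1 ≤ i ∧ i ≤ m ∧ i % 3 = 0} := by
    ext x
    constructor
    · rintro ⟨⟨i, hi1, hi2, hi3, ⟨j, hj⟩⟩, hx⟩
      refine ⟨i, ⟨hi1, hi2, hi3⟩, ?_⟩
      rw [← (toIcoMod_eq_self hm).2 hx, toIcoMod_eq_toIcoMod]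
      exact ⟨j, by rw [hj, smul_eq_mul, mul_comm]⟩
    · rintro ⟨i, ⟨hi1, hi2, hi3⟩, rfl⟩
      refine ⟨⟨i, hi1, hi2, hi3, ⟨-toIcoDiv hm a (i * c), ?_⟩⟩, toIcoMod_mem_Ico hm a _⟩
      rw [toIcoMod_sub_self, smul_eq_mul, mul_comm]
  have hinj : InjOn (fun i => toIcoMod hm a (i * c)) {i : ℤ | 1 ≤ i ∧ i ≤ m ∧ i % 3 = 0} := by
    rintro i ⟨hi1, hi2, -⟩ j ⟨hj1, hj2, -⟩ hij
    obtain ⟨n, hn⟩ := (toIcoMod_eq_toIcoMod hm).1 hij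
    have hdvd : m ∣ (j - i) * c := ⟨n, by rw [sub_mul, hn, smul_eq_mul, mul_comm]⟩
    have := Int.eq_zero_of_abs_lt_dvd (hc.dvd_of_dvd_mul_right hdvd)
      (abs_lt.2 ⟨by omega, by omega⟩)
    omega
  rw [himage, hinj.ncard_image, ncard_multiples_three_Icc]

lemma sPacking_everyThirdMultiple (l1 l2 : ℤ) (h1 : 0 < l1) (h2 : 0 < l2)
    (hc : IsCoprime (2 * l1 + l2) l1) :
    SPacking {0, l1, l1 + l2} (everyThirdMultiple (2 * l1 + l2) l1) := by
  have hbound : ∀ s ∈ ({0, l1, l1 + l2} : Set ℤ), 0 ≤ s ∧ s ≤ l1 + l2 := by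
    rintro s (rfl | rfl | rfl) <;> omega
  rintro a₁ ⟨i₁, hi₁, hi₁', hi₁3, ha₁⟩ a₂ ⟨i₂, hi₂, hi₂', hi₂3, ha₂⟩ hne
  rw [disjoint_left]
  rintro _ ⟨s₁, hs₁, rfl⟩ ⟨s₂, hs₂, heq : s₂ + a₂ = s₁ + a₁⟩
  obtain ⟨j₁, hj₁, hj₁', hsj₁⟩ := exists_dvd_sub_mul_of_mem_triple hs₁
  obtain ⟨j₂, hj₂, hj₂', hsj₂⟩ := exists_dvd_sub_mul_of_mem_triple hs₂
  have hdvd : 2 * l1 + l2 ∣ (i₂ + j₂ - (i₁ + j₁)) * l1 := by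
    have hsplit : (i₂ + j₂ - (i₁ + j₁)) * l1 =
        (a₁ - i₁ * l1) + (s₁ - j₁ * l1) - (a₂ - i₂ * l1) - (s₂ - j₂ * l1) := by
      linear_combination heq
    rw [hsplit]
    exact ((ha₁.add hsj₁).sub ha₂).sub hsj₂
  have hij := Int.eq_zero_of_abs_lt_dvd (hc.dvd_of_dvd_mul_right hdvd)
    (abs_lt.2 ⟨by omega, by omega⟩)
  have hj : j₁ = j₂ := by omega
  have hs : 2 * l1 + l2 ∣ s₁ - s₂ := by
    simpa [hj] using hsj₁.sub hsj₂
  obtain ⟨hs₁0, hs₁l⟩ := hbound s₁ hs₁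
  obtain ⟨hs₂0, hs₂l⟩ := hbound s₂ hs₂
  have := Int.eq_zero_of_abs_lt_dvd hs (abs_lt.2 ⟨by omega, by omega⟩)
  exact hne (by omega)

end EveryThirdMultiple

lemma upperDensity_le_one (A : Set ℤ) : upperDensity A ≤ 1 := by
  refine limsup_le_of_le (isCoboundedUnder_le_of_le atTop (x := 0) fun n => by positivity)
    (Eventually.of_forall fun n => ?_)
  rw [div_le_one (by positivity)]
  have hIcc : (Icc (-(n : ℤ)) n).ncard = 2 * n + 1 := by
    rw [← Finset.coe_Icc, ncard_coe_finset, Int.card_Icc]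
    omega
  exact_mod_cast hIcc ▸ ncard_le_ncard inter_subset_right (finite_Icc _ _)

lemma upperDensity_le_dP {S A : Set ℤ} (hA : SPacking S A) : upperDensity A ≤ dP S :=
  le_csSup ⟨1, by rintro _ ⟨B, -, rfl⟩; exact upperDensity_le_one B⟩ ⟨A, hA, rfl⟩

lemma floor_one_third_mul (m : ℤ) : ⌊(1 : ℝ) / 3 * m⌋ = m / 3 := by
  rw [one_div_mul_eq_div, ← Nat.cast_ofNat, Int.floor_div_natCast, Int.floor_intCast]
  rfl

theorem stmt13_general (l1 l2 : ℤ) (h1 : 0 < l1) (h2 : 0 < l2) (hco : Int.gcd l1 l2 = 1) :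
    SPacking ({0, l1, l1 + l2} : Set ℤ)
      {x : ℤ | ∃ i : ℤ, 1 ≤ i ∧ i ≤ 2 * l1 + l2 ∧ i % 3 = 0 ∧ (2 * l1 + l2) ∣ (x - i * l1)} ∧
    upperDensity {x : ℤ | ∃ i : ℤ, 1 ≤ i ∧ i ≤ 2 * l1 + l2 ∧ i % 3 = 0 ∧ (2 * l1 + l2) ∣ (x - i * l1)} =
      (⌊(1 : ℝ) / 3 * (2 * l1 + l2)⌋ : ℝ) / (2 * l1 + l2) ∧
    lowerDensity {x : ℤ | ∃ i : ℤ, 1 ≤ i ∧ i ≤ 2 * l1 + l2 ∧ i % 3 = 0 ∧ (2 * l1 + l2) ∣ (x - i * l1)} =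
      (⌊(1 : ℝ) / 3 * (2 * l1 + l2)⌋ : ℝ) / (2 * l1 + l2) ∧
    dP ({0, l1, l1 + l2} : Set ℤ) ≥ (⌊(1 : ℝ) / 3 * (2 * l1 + l2)⌋ : ℝ) / (2 * l1 + l2) := by
  change SPacking _ (everyThirdMultiple (2 * l1 + l2) l1) ∧
    upperDensity (everyThirdMultiple (2 * l1 + l2) l1) = _ ∧
    lowerDensity (everyThirdMultiple (2 * l1 + l2) l1) = _ ∧ _
  have hm : 0 < 2 * l1 + l2 := by omega
  have hc : IsCoprime (2 * l1 + l2) l1 := by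
    simpa [add_comm, mul_comm] using (Int.isCoprime_iff_gcd_eq_one.2 hco).symm.add_mul_left_left 2
  have hpack := sPacking_everyThirdMultiple l1 l2 h1 h2 hc
  have hlim := tendsto_ncard_inter_Icc_div (ncard_everyThirdMultiple_inter_Ico hm hc) hm
  have hval : (((2 * l1 + l2) / 3).toNat : ℝ) / ((2 * l1 + l2 : ℤ) : ℝ) =
      (⌊(1 : ℝ) / 3 * (2 * l1 + l2)⌋ : ℝ) / (2 * l1 + l2) := by
    rw [← Int.cast_natCast, Int.toNat_of_nonneg (by omega), ← floor_one_third_mul]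
    push_cast
    rfl
  rw [hval] at hlim
  refine ⟨hpack, hlim.limsup_eq, hlim.liminf_eq, ?_⟩
  exact hlim.limsup_eq ▸ upperDensity_le_dP hpack

theorem stmt13 (l1 l2 : ℤ) (h1 : 0 < l1) (h2 : 0 < l2) (hco : Int.gcd l1 l2 = 1)
    (hmod : l1 % 3 = (l2 - 1) % 3) :
    SPacking ({0, l1, l1 + l2} : Set ℤ)
      {x : ℤ | ∃ i : ℤ, 1 ≤ i ∧ i ≤ 2 * l1 + l2 ∧ i % 3 = 0 ∧ (2 * l1 + l2) ∣ (x - i * l1)} ∧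
    upperDensity {x : ℤ | ∃ i : ℤ, 1 ≤ i ∧ i ≤ 2 * l1 + l2 ∧ i % 3 = 0 ∧ (2 * l1 + l2) ∣ (x - i * l1)} =
      (⌊(1 : ℝ) / 3 * (2 * l1 + l2)⌋ : ℝ) / (2 * l1 + l2) ∧
    lowerDensity {x : ℤ | ∃ i : ℤ, 1 ≤ i ∧ i ≤ 2 * l1 + l2 ∧ i % 3 = 0 ∧ (2 * l1 + l2) ∣ (x - i * l1)} =
      (⌊(1 : ℝ) / 3 * (2 * l1 + l2)⌋ : ℝ) / (2 * l1 + l2) ∧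
    dP ({0, l1, l1 + l2} : Set ℤ) ≥ (⌊(1 : ℝ) / 3 * (2 * l1 + l2)⌋ : ℝ) / (2 * l1 + l2) :=
  stmt13_general l1 l2 h1 h2 hco
end
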